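/- arXiv:1307.6835 — 3 statements merged into one kernel-verified Lean document; each statement's English description precedes it below -/
import Mathlib

section
/- Let S be a nonempty class of designs of N ≥ 2 pairwise distinct points in [0,1]^d, let p > 0, let ξ*_p ∈ S be a design minimizing φ_p over S, and let ξ* ∈ S be a design maximizing φ_Mm over S. Then (N(N−1)/2)^(−1/p) · φ_Mm(ξ*) ≤ φ_Mm(ξ*_p) ≤ φ_Mm(ξ*); equivalently, 1 ≥ φ_Mm(ξ*_p)/φ_Mm(ξ*) ≥ (N(N−1)/2)^(−1/p). -/
open Finset

/-- The mindist (maximin) criterion of a design: the minimum of the Euclidean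
distances between pairs of distinct-index design points. -/
noncomputable def mindist {N d : ℕ} (X : Fin N → EuclideanSpace ℝ (Fin d)) : ℝ :=
  sInf {r : ℝ | ∃ i j : Fin N, i ≠ j ∧ r = dist (X i) (X j)}

/-- The regularized criterion φ_p of a design:
`φ_p(X) = (Σ_{i<j} d_ij^(−p))^(1/p)`. -/
noncomputable def phiP {N d : ℕ} (p : ℝ) (X : Fin N → EuclideanSpace ℝ (Fin d)) : ℝ :=
  (∑ ij ∈ Finset.univ.filter (fun ij : Fin N × Fin N => ij.1 < ij.2),
      dist (X ij.1) (X ij.2) ^ (-p)) ^ (1 / p)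

lemma mindist_finite {N d : ℕ} (X : Fin N → EuclideanSpace ℝ (Fin d)) :
    {r : ℝ | ∃ i j : Fin N, i ≠ j ∧ r = dist (X i) (X j)}.Finite := by
  apply (Set.finite_range (fun ij : Fin N × Fin N => dist (X ij.1) (X ij.2))).subset
  rintro r ⟨i, j, _, rfl⟩
  exact ⟨(i, j), rfl⟩

lemma mindist_le {N d : ℕ} (X : Fin N → EuclideanSpace ℝ (Fin d)) {i j : Fin N}
    (hij : i ≠ j) : mindist X ≤ dist (X i) (X j) :=
  csInf_le (mindist_finite X).bddBelow ⟨i, j, hij, rfl⟩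

lemma mindist_mem {N d : ℕ} (hN : 2 ≤ N) (X : Fin N → EuclideanSpace ℝ (Fin d)) :
    ∃ i j : Fin N, i ≠ j ∧ mindist X = dist (X i) (X j) := by
  have hne : {r : ℝ | ∃ i j : Fin N, i ≠ j ∧ r = dist (X i) (X j)}.Nonempty := by
    refine ⟨dist (X ⟨0, by omega⟩) (X ⟨1, by omega⟩), ⟨0, by omega⟩, ⟨1, by omega⟩, ?_, rfl⟩
    simp [Fin.ext_iff]
  exact hne.csInf_mem (mindist_finite X)

lemma mindist_pos {N d : ℕ} (hN : 2 ≤ N) (X : Fin N → EuclideanSpace ℝ (Fin d))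
    (hX : Function.Injective X) : 0 < mindist X := by
  obtain ⟨i, j, hij, h⟩ := mindist_mem hN X
  rw [h]
  exact dist_pos.mpr (fun e => hij (hX e))

lemma card_lt_pairs (N : ℕ) :
    2 * ((Finset.univ.filter (fun ij : Fin N × Fin N => ij.1 < ij.2)).card) = N * (N - 1) := by
  classical
  have hswap : (Finset.univ.filter (fun ij : Fin N × Fin N => ij.1 < ij.2)).card =
      (Finset.univ.filter (fun ij : Fin N × Fin N => ij.2 < ij.1)).card := by
    apply Finset.card_bij' (fun p _ => (p.2, p.1)) (fun p _ => (p.2, p.1)) <;>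
      simp +contextual [Finset.mem_filter]
  have hunion : (Finset.univ.filter (fun ij : Fin N × Fin N => ij.1 < ij.2)) ∪
      (Finset.univ.filter (fun ij : Fin N × Fin N => ij.2 < ij.1)) =
      (Finset.univ : Finset (Fin N)).offDiag := by
    ext p
    simp only [Finset.mem_union, Finset.mem_filter, Finset.mem_offDiag, Finset.mem_univ,
      true_and]
    constructor
    · rintro (h | h)
      · exact ne_of_lt h
      · exact (ne_of_lt h).symm
    · intro h
      exact lt_or_gt_of_ne h
  have hdisj : Disjoint (Finset.univ.filter (fun ij : Fin N × Fin N => ij.1 < ij.2))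
      (Finset.univ.filter (fun ij : Fin N × Fin N => ij.2 < ij.1)) := by
    rw [Finset.disjoint_filter]
    intro p _ h1 h2
    exact absurd h1 (not_lt_of_gt h2)
  have hcard := Finset.card_union_of_disjoint hdisj
  rw [hunion] at hcard
  rw [Finset.offDiag_card] at hcard
  simp only [Finset.card_univ, Fintype.card_fin] at hcard
  have : N * N - N = N * (N - 1) := by
    cases N with
    | zero => simp
    | succ n => rw [Nat.succ_sub_one, Nat.mul_succ]; omega
  omega

theorem stmt_2 {N d : ℕ} (hN : 2 ≤ N) (p : ℝ) (hp : 0 < p)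
    (S : Set (Fin N → EuclideanSpace ℝ (Fin d))) (hS : S.Nonempty)
    (hcube : ∀ X ∈ S, ∀ i : Fin N, ∀ k : Fin d, X i k ∈ Set.Icc (0 : ℝ) 1)
    (hdistinct : ∀ X ∈ S, Function.Injective X)
    (ξp : Fin N → EuclideanSpace ℝ (Fin d)) (hξpS : ξp ∈ S)
    (hξp : ∀ X ∈ S, phiP p ξp ≤ phiP p X)
    (ξ : Fin N → EuclideanSpace ℝ (Fin d)) (hξS : ξ ∈ S)
    (hξ : ∀ X ∈ S, mindist X ≤ mindist ξ) :
    ((N * (N - 1) / 2 : ℝ)) ^ (-(1 / p)) * mindist ξ ≤ mindist ξp ∧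
      mindist ξp ≤ mindist ξ := by
  have hupper : mindist ξp ≤ mindist ξ := hξ ξp hξpS
  refine ⟨?_, hupper⟩
  set T : Finset (Fin N × Fin N) :=
    Finset.univ.filter (fun ij : Fin N × Fin N => ij.1 < ij.2) with hT
  set C : ℝ := (N * (N - 1) / 2 : ℝ) with hC
  have hNr : (2 : ℝ) ≤ (N : ℝ) := by exact_mod_cast hN
  have hCpos : 0 < C := by
    rw [hC]; nlinarith
  have hCcard : (T.card : ℝ) = C := by
    have h := card_lt_pairs N
    have h1 : ((N - 1 : ℕ) : ℝ) = (N : ℝ) - 1 := by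
      rw [Nat.cast_sub (by omega)]; norm_num
    rw [hC]
    have h2 : (2 : ℝ) * T.card = (N : ℝ) * ((N : ℝ) - 1) := by
      rw [← h1]
      exact_mod_cast h
    linarith
  have hmξp : 0 < mindist ξp := mindist_pos hN ξp (hdistinct ξp hξpS)
  have hmξ : 0 < mindist ξ := mindist_pos hN ξ (hdistinct ξ hξS)
  -- lower bound on the sum for ξp
  have hsum_lb : (mindist ξp) ^ (-p) ≤ ∑ ij ∈ T, dist (ξp ij.1) (ξp ij.2) ^ (-p) := by
    obtain ⟨i, j, hij, hm⟩ := mindist_mem hN ξp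
    rcases lt_or_gt_of_ne hij with h | h
    · have hmem : (i, j) ∈ T := by simp [hT, h]
      have := Finset.single_le_sum
        (f := fun ij : Fin N × Fin N => dist (ξp ij.1) (ξp ij.2) ^ (-p))
        (fun ij _ => Real.rpow_nonneg dist_nonneg _) hmem
      rwa [hm]
    · have hmem : (j, i) ∈ T := by simp [hT, h]
      have := Finset.single_le_sum
        (f := fun ij : Fin N × Fin N => dist (ξp ij.1) (ξp ij.2) ^ (-p))
        (fun ij _ => Real.rpow_nonneg dist_nonneg _) hmem
      rw [hm, dist_comm]
      exact this
  -- upper bound on the sum for ξ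
  have hsum_ub : ∑ ij ∈ T, dist (ξ ij.1) (ξ ij.2) ^ (-p) ≤ C * (mindist ξ) ^ (-p) := by
    have hle : ∀ ij ∈ T, dist (ξ ij.1) (ξ ij.2) ^ (-p) ≤ (mindist ξ) ^ (-p) := by
      intro ij hij
      have hne : ij.1 ≠ ij.2 := ne_of_lt (Finset.mem_filter.mp hij).2
      exact Real.rpow_le_rpow_of_nonpos hmξ (mindist_le ξ hne) (by linarith)
    calc ∑ ij ∈ T, dist (ξ ij.1) (ξ ij.2) ^ (-p) ≤ T.card • (mindist ξ) ^ (-p) :=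
          Finset.sum_le_card_nsmul T _ _ hle
      _ = C * (mindist ξ) ^ (-p) := by rw [nsmul_eq_mul, hCcard]
  have hsum_nonneg : 0 ≤ ∑ ij ∈ T, dist (ξp ij.1) (ξp ij.2) ^ (-p) :=
    Finset.sum_nonneg (fun ij _ => Real.rpow_nonneg dist_nonneg _)
  -- (m^(-p))^(1/p) = m⁻¹
  have hpow_inv : ∀ m : ℝ, 0 < m → (m ^ (-p)) ^ (1 / p) = m⁻¹ := by
    intro m hm
    rw [← Real.rpow_mul hm.le]
    have : -p * (1 / p) = -1 := by field_simp
    rw [this, Real.rpow_neg_one]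
  -- chain of inequalities
  have h1 : (mindist ξp)⁻¹ ≤ phiP p ξp := by
    rw [← hpow_inv _ hmξp]
    exact Real.rpow_le_rpow (Real.rpow_nonneg hmξp.le _) hsum_lb (by positivity)
  have h2 : phiP p ξ ≤ C ^ (1 / p) * (mindist ξ)⁻¹ := by
    have := Real.rpow_le_rpow
      (Finset.sum_nonneg (fun ij _ => Real.rpow_nonneg dist_nonneg _))
      hsum_ub (le_of_lt (by positivity : (0:ℝ) < 1 / p))
    calc phiP p ξ ≤ (C * (mindist ξ) ^ (-p)) ^ (1 / p) := this
      _ = C ^ (1 / p) * (mindist ξ)⁻¹ := by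
          rw [Real.mul_rpow hCpos.le (Real.rpow_nonneg hmξ.le _), hpow_inv _ hmξ]
  have hchain : (mindist ξp)⁻¹ ≤ C ^ (1 / p) * (mindist ξ)⁻¹ :=
    le_trans h1 (le_trans (hξp ξ hξS) h2)
  have hKpos : 0 < C ^ (1 / p) := Real.rpow_pos_of_pos hCpos _
  rw [Real.rpow_neg hCpos.le]
  -- from (mindist ξp)⁻¹ ≤ K * (mindist ξ)⁻¹ conclude K⁻¹ * mindist ξ ≤ mindist ξp
  have := inv_anti₀ (by positivity) hchain
  rw [inv_inv, mul_inv, inv_inv] at this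
  calc (C ^ (1 / p))⁻¹ * mindist ξ = (C ^ (1 / p))⁻¹ * mindist ξ := rfl
    _ ≤ mindist ξp := by rw [mul_comm] at this ⊢; exact this
end

section
/- Let S be a nonempty class of designs of N ≥ 2 pairwise distinct points in [0,1]^d, let ξ*_p ∈ S minimize φ_p over S and let ξ* ∈ S maximize φ_Mm over S. For any threshold ε with 0 < ε ≤ 1, if p ≥ 2 (ln N)/ε then φ_Mm(ξ*_p) ≥ (1 − ε) · φ_Mm(ξ*). -/
open Finset

lemma mindist_spec {N d : ℕ} (hN : 2 ≤ N) (X : Fin N → EuclideanSpace ℝ (Fin d))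
    (hX : Function.Injective X) :
    0 < mindist X ∧ (∃ i j : Fin N, i < j ∧ mindist X = dist (X i) (X j)) ∧
      ∀ i j : Fin N, i < j → mindist X ≤ dist (X i) (X j) := by
  classical
  set T : Finset ℝ := (Finset.univ.filter (fun ij : Fin N × Fin N => ij.1 < ij.2)).image
      (fun ij => dist (X ij.1) (X ij.2)) with hT
  have hi0 : (0 : ℕ) < N := by omega
  have hj0 : (1 : ℕ) < N := by omega
  have hlt : (⟨0, hi0⟩ : Fin N) < ⟨1, hj0⟩ := by simp [Fin.lt_def]
  have hne : T.Nonempty := ⟨dist (X ⟨0, hi0⟩) (X ⟨1, hj0⟩), by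
    simp only [hT, mem_image, mem_filter, mem_univ, true_and]
    exact ⟨(⟨0, hi0⟩, ⟨1, hj0⟩), hlt, rfl⟩⟩
  have hset : {r : ℝ | ∃ i j : Fin N, i ≠ j ∧ r = dist (X i) (X j)} = ↑T := by
    ext r
    simp only [Set.mem_setOf_eq, hT, coe_image, Set.mem_image, mem_coe, mem_filter,
      mem_univ, true_and]
    constructor
    · rintro ⟨i, j, hij, rfl⟩
      rcases lt_or_gt_of_ne hij with h | h
      · exact ⟨(i, j), h, rfl⟩
      · exact ⟨(j, i), h, (dist_comm (X j) (X i))⟩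
    · rintro ⟨ij, h, rfl⟩
      exact ⟨ij.1, ij.2, ne_of_lt h, rfl⟩
  have hmd : mindist X = T.min' hne := by
    rw [mindist, hset, hne.csInf_eq_min']
  obtain ⟨ij, hij, hval⟩ := mem_image.mp (T.min'_mem hne)
  have hijlt : ij.1 < ij.2 := (mem_filter.mp hij).2
  refine ⟨?_, ⟨ij.1, ij.2, hijlt, by rw [hmd, hval]⟩, ?_⟩
  · rw [hmd, ← hval]
    exact dist_pos.mpr (fun h => absurd (hX h) (ne_of_lt hijlt))
  · intro i j h
    rw [hmd]
    exact T.min'_le _ (mem_image.mpr ⟨(i, j), mem_filter.mpr ⟨mem_univ _, h⟩, rfl⟩)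

set_option maxHeartbeats 2000000 in
lemma phiP_bounds {N d : ℕ} (hN : 2 ≤ N) {p : ℝ} (hp : 0 < p)
    (X : Fin N → EuclideanSpace ℝ (Fin d)) (hX : Function.Injective X) :
    (mindist X)⁻¹ ≤ phiP p X ∧
      phiP p X ≤ ((Finset.univ.filter
        (fun ij : Fin N × Fin N => ij.1 < ij.2)).card : ℝ) ^ (1 / p) * (mindist X)⁻¹ := by
  classical
  obtain ⟨hm0, ⟨i0, j0, hij0, hmeq⟩, hle⟩ := mindist_spec hN X hX
  set m := mindist X
  set P := Finset.univ.filter (fun ij : Fin N × Fin N => ij.1 < ij.2) with hP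
  have hterm : ∀ ij ∈ P, (0:ℝ) ≤ dist (X ij.1) (X ij.2) ^ (-p) := fun ij _ =>
    Real.rpow_nonneg dist_nonneg _
  have hmp : (m ^ (-p)) ^ (1 / p) = m⁻¹ := by
    have h1 : (-p) * (1 / p) = -1 := by field_simp
    rw [← Real.rpow_mul hm0.le, h1, Real.rpow_neg_one]
  have hlb : m ^ (-p) ≤ ∑ ij ∈ P, dist (X ij.1) (X ij.2) ^ (-p) := by
    have hmem : (i0, j0) ∈ P := mem_filter.mpr ⟨mem_univ _, hij0⟩
    have h := Finset.single_le_sum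
      (f := fun ij : Fin N × Fin N => dist (X ij.1) (X ij.2) ^ (-p)) hterm hmem
    rw [hmeq]
    exact h
  have hub : ∑ ij ∈ P, dist (X ij.1) (X ij.2) ^ (-p) ≤ (P.card : ℝ) * m ^ (-p) := by
    have h1 : ∑ ij ∈ P, dist (X ij.1) (X ij.2) ^ (-p) ≤ ∑ _ij ∈ P, m ^ (-p) :=
      Finset.sum_le_sum (fun ij hij =>
        Real.rpow_le_rpow_of_nonpos hm0 (hle ij.1 ij.2 (mem_filter.mp hij).2)
          (neg_nonpos.mpr hp.le))
    rw [Finset.sum_const, nsmul_eq_mul] at h1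
    exact h1
  have h2 : (m ^ (-p)) ^ (1 / p) ≤ phiP p X := by
    rw [phiP]
    exact Real.rpow_le_rpow (Real.rpow_nonneg hm0.le _) hlb (by positivity)
  have h3 : phiP p X ≤ ((P.card : ℝ) * m ^ (-p)) ^ (1 / p) := by
    rw [phiP]
    exact Real.rpow_le_rpow (Finset.sum_nonneg hterm) hub (by positivity)
  rw [Real.mul_rpow (Nat.cast_nonneg _) (Real.rpow_nonneg hm0.le _), hmp] at h3
  rw [hmp] at h2
  exact ⟨h2, h3⟩

theorem stmt_3 {N d : ℕ} (hN : 2 ≤ N) (p : ℝ)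
    (S : Set (Fin N → EuclideanSpace ℝ (Fin d))) (hS : S.Nonempty)
    (hcube : ∀ X ∈ S, ∀ i : Fin N, ∀ k : Fin d, X i k ∈ Set.Icc (0 : ℝ) 1)
    (hdistinct : ∀ X ∈ S, Function.Injective X)
    (ξp : Fin N → EuclideanSpace ℝ (Fin d)) (hξpS : ξp ∈ S)
    (hξp : ∀ X ∈ S, phiP p ξp ≤ phiP p X)
    (ξ : Fin N → EuclideanSpace ℝ (Fin d)) (hξS : ξ ∈ S)
    (hξ : ∀ X ∈ S, mindist X ≤ mindist ξ)
    (ε : ℝ) (hε : 0 < ε) (hε1 : ε ≤ 1)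
    (hp : p ≥ 2 * Real.log N / ε) :
    mindist ξp ≥ (1 - ε) * mindist ξ := by
  have hN1 : (1 : ℝ) < (N : ℝ) := by exact_mod_cast (by omega : 1 < N)
  have hlogN : 0 < Real.log N := Real.log_pos hN1
  have hppos : 0 < p := lt_of_lt_of_le (by positivity) hp
  set P := Finset.univ.filter (fun ij : Fin N × Fin N => ij.1 < ij.2) with hP
  -- P is nonempty and has at most N*N elements
  have hi0 : (0 : ℕ) < N := by omega
  have hj0 : (1 : ℕ) < N := by omega
  have hPne : P.Nonempty := ⟨(⟨0, hi0⟩, ⟨1, hj0⟩), mem_filter.mpr ⟨mem_univ _, by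
    simp [Fin.lt_def]⟩⟩
  have hMpos : (0 : ℝ) < (P.card : ℝ) := by
    exact_mod_cast Finset.card_pos.mpr hPne
  have hMle : (P.card : ℝ) ≤ (N : ℝ) * N := by
    have h1 : P.card ≤ (Finset.univ : Finset (Fin N × Fin N)).card :=
      Finset.card_filter_le _ _
    have h2 : (Finset.univ : Finset (Fin N × Fin N)).card = N * N := by
      simp [Fintype.card_prod]
    rw [h2] at h1
    exact_mod_cast h1
  set c := ((P.card : ℝ)) ^ (1 / p) with hc
  have hcpos : 0 < c := Real.rpow_pos_of_pos hMpos _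
  have hcle : c ≤ Real.exp ε := by
    have h1 : c ≤ ((N : ℝ) * N) ^ (1 / p) :=
      Real.rpow_le_rpow (Nat.cast_nonneg _) hMle (by positivity)
    have hNN : (0 : ℝ) < (N : ℝ) * N := by positivity
    rw [Real.rpow_def_of_pos hNN] at h1
    have hlog : Real.log ((N : ℝ) * N) = 2 * Real.log N := by
      rw [Real.log_mul (by positivity) (by positivity)]; ring
    have h3 : 2 * Real.log N ≤ p * ε := (div_le_iff₀ hε).mp hp
    have h4 : Real.log ((N : ℝ) * N) * (1 / p) ≤ ε := by
      rw [hlog]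
      rw [mul_one_div, div_le_iff₀ hppos]
      linarith
    exact h1.trans (Real.exp_le_exp.mpr h4)
  obtain ⟨ha1, _⟩ := phiP_bounds hN hppos ξp (hdistinct _ hξpS)
  obtain ⟨_, hb2⟩ := phiP_bounds hN hppos ξ (hdistinct _ hξS)
  obtain ⟨ha0, -, -⟩ := mindist_spec hN ξp (hdistinct _ hξpS)
  obtain ⟨hb0, -, -⟩ := mindist_spec hN ξ (hdistinct _ hξS)
  have chain : (mindist ξp)⁻¹ ≤ c * (mindist ξ)⁻¹ :=
    ha1.trans ((hξp ξ hξS).trans hb2)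
  have h8 : c⁻¹ * mindist ξ ≤ mindist ξp := by
    have h := inv_anti₀ (inv_pos.mpr ha0) chain
    rwa [inv_inv, mul_inv, inv_inv] at h
  have key : 1 - ε ≤ c⁻¹ := by
    have h5 : 1 - ε ≤ Real.exp (-ε) := by linarith [Real.add_one_le_exp (-ε)]
    have h6 : (Real.exp ε)⁻¹ ≤ c⁻¹ := inv_anti₀ hcpos hcle
    rw [Real.exp_neg] at h5
    linarith
  have : (1 - ε) * mindist ξ ≤ c⁻¹ * mindist ξ :=
    mul_le_mul_of_nonneg_right key hb0.le
  linarith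
end

section
/- (Closed-form expression of the star L²-discrepancy.) Let X = (x^(1),…,x^(N)) be a design of N ≥ 1 points in [0,1]^d. Then the square of the star L²-discrepancy admits the closed form: ∫_{[0,1]^d} [ (1/N) #{ i : x^(i) ∈ [0,y] } − Π_{k=1}^d y_k ]² dy = 3^(−d) − (2/N) Σ_{i=1}^N Π_{k=1}^d (1 − (x_k^(i))²)/2 + (1/N²) Σ_{i=1}^N Σ_{j=1}^N Π_{k=1}^d (1 − max(x_k^(i), x_k^(j))), where #{ i : x^(i) ∈ [0,y] } denotes the number of indices i such that x_k^(i) ≤ y_k for all k = 1,…,d, and the integral is the Lebesgue integral over the unit cube. -/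
/-!
Write the counting function as `∑ᵢ 1[x⁽ⁱ⁾ ≤ y]` and expand the square. Since
`1[x⁽ⁱ⁾ ≤ y] · 1[x⁽ʲ⁾ ≤ y] = 1[x⁽ⁱ⁾ ⊔ x⁽ʲ⁾ ≤ y]`, each term of the expansion is the integral of
`∏ₖ yₖⁿ` over a box `∏ₖ [aₖ, 1]`, and Fubini reduces it to `∏ₖ (1 - aₖⁿ⁺¹) / (n + 1)`,
with `n = 0, 1, 2` for the three terms.
-/

open Finset MeasureTheory

theorem setIntegral_univ_pi_prod {𝕜 ι : Type*} [RCLike 𝕜] [Fintype ι] {E : ι → Type*}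
    [∀ i, MeasurableSpace (E i)] (μ : ∀ i, Measure (E i)) [∀ i, SigmaFinite (μ i)]
    (s : ∀ i, Set (E i)) (f : ∀ i, E i → 𝕜) :
    ∫ x in Set.univ.pi s, ∏ i, f i (x i) ∂Measure.pi μ
      = ∏ i, ∫ t in s i, f i t ∂μ i := by
  rw [Measure.restrict_pi_pi]
  exact integral_fintype_prod_eq_prod f

theorem univ_pi_Icc_inter_Ici {ι α : Type*} [LinearOrder α] {l u : α} {a : ι → α}
    (ha : ∀ k, l ≤ a k) :
    Set.univ.pi (fun _ => Set.Icc l u) ∩ Set.Ici a = Set.univ.pi fun k => Set.Icc (a k) u := by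
  rw [← Set.pi_univ_Ici, ← Set.pi_inter_distrib]
  refine Set.pi_congr rfl fun k _ => ?_
  rw [← Set.Ici_inter_Iic, Set.inter_right_comm, Set.Ici_inter_Ici, max_eq_right (ha k),
    Set.Ici_inter_Iic]

theorem natCast_card_filter_forall_le {ι κ α R : Type*} [Fintype ι] [Preorder α]
    [AddCommMonoidWithOne R] (x : ι → κ → α) (y : κ → α)
    [DecidablePred fun i => ∀ k, x i k ≤ y k] :
    (#{i | ∀ k, x i k ≤ y k} : R) = ∑ i, (Set.Ici (x i)).indicator 1 y := by
  rw [natCast_card_filter]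
  refine sum_congr rfl fun i _ => ?_
  simp only [Set.indicator, Set.mem_Ici, Pi.le_def, Pi.one_apply]

theorem sq_mul_sum_indicator_Ici_sub {ι α R : Type*} [Fintype ι] [SemilatticeSup α] [CommRing R]
    (x : ι → α) (c : R) (g : α → R) (y : α) :
    (c * ∑ i, (Set.Ici (x i)).indicator 1 y - g y) ^ 2
      = c ^ 2 * ∑ i, ∑ j, (Set.Ici (x i ⊔ x j)).indicator 1 y
        - 2 * c * ∑ i, (Set.Ici (x i)).indicator g y + g y ^ 2 := by
  have hsq : (∑ i, (Set.Ici (x i)).indicator (1 : α → R) y) ^ 2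
      = ∑ i, ∑ j, (Set.Ici (x i ⊔ x j)).indicator 1 y := by
    simp only [sq, sum_mul_sum, ← Set.Ici_inter_Ici, Set.inter_indicator_one, Pi.mul_apply]
  have hg : (∑ i, (Set.Ici (x i)).indicator 1 y) * g y
      = ∑ i, (Set.Ici (x i)).indicator g y := by
    simp only [sum_mul, ← Set.indicator_mul_left, Pi.one_apply, one_mul]
  rw [← hsq, ← hg]
  ring

section UnitCube

variable {ι : Type*} [Fintype ι]

theorem setIntegral_univ_pi_Icc_prod_pow {a b : ι → ℝ} (hab : a ≤ b) (n : ℕ) :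
    ∫ y in Set.univ.pi fun k => Set.Icc (a k) (b k), ∏ k, y k ^ n
      = ∏ k, (b k ^ (n + 1) - a k ^ (n + 1)) / (n + 1) := by
  rw [volume_pi, setIntegral_univ_pi_prod (fun _ => volume) _ fun _ t => t ^ n]
  refine prod_congr rfl fun k _ => ?_
  rw [integral_Icc_eq_integral_Ioc, ← intervalIntegral.integral_of_le (hab k), integral_pow]

theorem setIntegral_unitCube_indicator_Ici_prod_pow {a : ι → ℝ}
    (ha : ∀ k, a k ∈ Set.Icc (0 : ℝ) 1) (n : ℕ) :
    ∫ y in Set.univ.pi fun _ : ι => Set.Icc (0 : ℝ) 1,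
        (Set.Ici a).indicator (fun y => ∏ k, y k ^ n) y
      = ∏ k, (1 - a k ^ (n + 1)) / (n + 1) := by
  rw [setIntegral_indicator measurableSet_Ici, univ_pi_Icc_inter_Ici fun k => (ha k).1,
    setIntegral_univ_pi_Icc_prod_pow (b := fun _ => 1) fun k => (ha k).2]
  simp only [one_pow]

theorem setIntegral_unitCube_indicator_Ici_one {a : ι → ℝ}
    (ha : ∀ k, a k ∈ Set.Icc (0 : ℝ) 1) :
    ∫ y in Set.univ.pi fun _ : ι => Set.Icc (0 : ℝ) 1, (Set.Ici a).indicator 1 y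
      = ∏ k, (1 - a k) := by
  simpa only [pow_zero, prod_const_one, ← Pi.one_def, zero_add, pow_one, Nat.cast_zero,
    div_one] using setIntegral_unitCube_indicator_Ici_prod_pow ha 0

theorem setIntegral_unitCube_indicator_Ici_prod {a : ι → ℝ}
    (ha : ∀ k, a k ∈ Set.Icc (0 : ℝ) 1) :
    ∫ y in Set.univ.pi fun _ : ι => Set.Icc (0 : ℝ) 1,
        (Set.Ici a).indicator (fun y => ∏ k, y k) y
      = ∏ k, (1 - a k ^ 2) / 2 := by
  simpa only [pow_one, Nat.cast_one, one_add_one_eq_two]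
    using setIntegral_unitCube_indicator_Ici_prod_pow ha 1

theorem setIntegral_unitCube_prod_sq :
    ∫ y in Set.univ.pi fun _ : ι => Set.Icc (0 : ℝ) 1, (∏ k, y k) ^ 2
      = (1 / 3) ^ Fintype.card ι := by
  simp_rw [← prod_pow]
  rw [setIntegral_univ_pi_Icc_prod_pow (a := fun _ => 0) (b := fun _ => 1) fun _ => zero_le_one]
  norm_num
  rw [one_div, inv_pow]

theorem integrableOn_unitCube {f : (ι → ℝ) → ℝ} (hf : Continuous f) :
    IntegrableOn f (Set.univ.pi fun _ : ι => Set.Icc (0 : ℝ) 1) :=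
  hf.continuousOn.integrableOn_compact (isCompact_univ_pi fun _ => isCompact_Icc)

end UnitCube

theorem stmt_5_general {N d : ℕ} (X : Fin N → Fin d → ℝ)
    (hcube : ∀ i : Fin N, ∀ k : Fin d, X i k ∈ Set.Icc (0 : ℝ) 1) :
    ∫ y in Set.univ.pi (fun _ : Fin d => Set.Icc (0 : ℝ) 1),
        ((1 / N : ℝ) *
            ((Finset.univ.filter (fun i : Fin N => ∀ k : Fin d, X i k ≤ y k)).card : ℝ)
          - ∏ k : Fin d, y k) ^ 2
      = ((1 : ℝ) / 3) ^ d
        - (2 / N : ℝ) * ∑ i : Fin N, ∏ k : Fin d, (1 - (X i k) ^ 2) / 2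
        + (1 / (N : ℝ) ^ 2) *
            ∑ i : Fin N, ∑ j : Fin N, ∏ k : Fin d, (1 - max (X i k) (X j k)) := by
  have hsup : ∀ i j k, (X i ⊔ X j) k ∈ Set.Icc (0 : ℝ) 1 := fun i j k =>
    ⟨(hcube i k).1.trans (le_max_left _ _), max_le (hcube i k).2 (hcube j k).2⟩
  have hsup_int : ∀ i j, IntegrableOn ((Set.Ici (X i ⊔ X j)).indicator 1)
      (Set.univ.pi fun _ : Fin d => Set.Icc (0 : ℝ) 1) :=
    fun i j => (integrableOn_unitCube continuous_one).indicator measurableSet_Ici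
  have hrow_int : ∀ i, IntegrableOn (fun y => ∑ j, (Set.Ici (X i ⊔ X j)).indicator 1 y)
      (Set.univ.pi fun _ : Fin d => Set.Icc (0 : ℝ) 1) :=
    fun i => integrable_finsetSum _ fun j _ => hsup_int i j
  have hprod_int : ∀ i, IntegrableOn ((Set.Ici (X i)).indicator fun y => ∏ k, y k)
      (Set.univ.pi fun _ : Fin d => Set.Icc (0 : ℝ) 1) :=
    fun i => (integrableOn_unitCube (by fun_prop)).indicator measurableSet_Ici
  have hquad := (integrable_finsetSum univ fun i _ => hrow_int i).const_mul ((1 / N : ℝ) ^ 2)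
  have hlin := (integrable_finsetSum univ fun i _ => hprod_int i).const_mul (2 * (1 / N : ℝ))
  simp_rw [natCast_card_filter_forall_le X, sq_mul_sum_indicator_Ici_sub]
  rw [integral_add ?_ (integrableOn_unitCube (by fun_prop)), integral_sub hquad hlin,
    integral_const_mul, integral_const_mul, integral_finsetSum _ fun i _ => hprod_int i,
    integral_finsetSum _ fun i _ => hrow_int i]
  · simp only [integral_finsetSum _ fun j _ => hsup_int _ j,
      setIntegral_unitCube_indicator_Ici_one (hsup _ _),
      setIntegral_unitCube_indicator_Ici_prod (hcube _),
      setIntegral_unitCube_prod_sq, Fintype.card_fin, Pi.sup_apply]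
    ring
  · exact hquad.sub hlin

theorem stmt_5 {N d : ℕ} (hN : 1 ≤ N) (X : Fin N → Fin d → ℝ)
    (hcube : ∀ i : Fin N, ∀ k : Fin d, X i k ∈ Set.Icc (0 : ℝ) 1) :
    ∫ y in Set.univ.pi (fun _ : Fin d => Set.Icc (0 : ℝ) 1),
        ((1 / N : ℝ) *
            ((Finset.univ.filter (fun i : Fin N => ∀ k : Fin d, X i k ≤ y k)).card : ℝ)
          - ∏ k : Fin d, y k) ^ 2
      = ((1 : ℝ) / 3) ^ d
        - (2 / N : ℝ) * ∑ i : Fin N, ∏ k : Fin d, (1 - (X i k) ^ 2) / 2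
        + (1 / (N : ℝ) ^ 2) *
            ∑ i : Fin N, ∑ j : Fin N, ∏ k : Fin d, (1 - max (X i k) (X j k)) :=
  stmt_5_general X hcube
end
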